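/- arXiv:1512.09170 — 10 statements merged into one kernel-verified Lean document; each statement's English description precedes it below -/
import Mathlib

section
/- Let d ≥ 1 and a > 0. For a real number t and a > 0, define the truncation m_a(t) = t if |t| ≤ a, m_a(t) = a if t > a, and m_a(t) = −a if t < −a; apply m_a coordinatewise to vectors of ℝ^d. Let u be a random vector distributed according to the uniform (rotation-invariant) probability measure on the unit Euclidean sphere S^{d−1} ⊂ ℝ^d. Then E[ ‖u − m_a(u)‖₂² ] ≤ 4·e^{−d·a²/2}. -/
/-!
By rotation invariance, `∫ exp ⟪u, v⟫ dμ` depends only on `‖v‖`, so it equals its average over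
the `2 ^ d` vectors `c • ε` with `ε ∈ {±1}ᵈ` and `c = ‖v‖ / √d`. That average is the integral
of `∏ᵢ cosh (c uᵢ) ≤ exp (c² ∑ᵢ uᵢ² / 2) = exp (‖v‖² / (2d))`, so each coordinate `uᵢ` is
sub-Gaussian with variance proxy `1 / d`. Since `(t - m_a t)² ≤ (t² - a²)₊`, the layer-cake
formula and the two-sided tail bound `P(a² + s < uᵢ²) ≤ 2 exp (-d (a² + s) / 2)` give
`E (uᵢ² - a²)₊ ≤ (4 / d) exp (-d a² / 2)`; summing over the `d` coordinates gives the claim.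
-/

open MeasureTheory

noncomputable def truncCoord (a t : ℝ) : ℝ :=
  if |t| ≤ a then t else if t > a then a else -a

noncomputable def truncVec (d : ℕ) (a : ℝ) (w : EuclideanSpace ℝ (Fin d)) :
    EuclideanSpace ℝ (Fin d) :=
  WithLp.toLp 2 (fun i => truncCoord a (w i))

open ProbabilityTheory Real
open scoped RealInnerProductSpace NNReal

lemma integral_comp_inner_eq_of_norm_eq {E : Type*} [NormedAddCommGroup E]
    [InnerProductSpace ℝ E] [MeasurableSpace E] [BorelSpace E] {μ : Measure E}
    (hrot : ∀ O : E ≃ₗᵢ[ℝ] E, μ.map O = μ) (f : ℝ → ℝ) {v w : E} (h : ‖v‖ = ‖w‖) :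
    ∫ u, f ⟪u, v⟫ ∂μ = ∫ u, f ⟪u, w⟫ ∂μ := by
  let O : E ≃ₗᵢ[ℝ] E := Submodule.reflection (ℝ ∙ (v - w))ᗮ
  have hO : O.symm v = w := by
    rw [Submodule.reflection_symm]; exact Submodule.reflection_sub h
  calc ∫ u, f ⟪u, v⟫ ∂μ = ∫ u, f ⟪u, v⟫ ∂(μ.map O.toHomeomorph.toMeasurableEquiv) := by
        rw [show ⇑O.toHomeomorph.toMeasurableEquiv = O from rfl, hrot O]
    _ = ∫ u, f ⟪O u, v⟫ ∂μ := integral_map_equiv _ _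
    _ = ∫ u, f ⟪u, w⟫ ∂μ := by
        simp_rw [← hO, ← O.inner_map_map _ (O.symm v), O.apply_symm_apply]

lemma sum_exp_sum_sign_mul_le {ι : Type*} [Fintype ι] [DecidableEq ι] (x : ι → ℝ) :
    ∑ ε ∈ Fintype.piFinset fun _ : ι => ({-1, 1} : Finset ℝ), exp (∑ i, ε i * x i)
      ≤ 2 ^ Fintype.card ι * exp (∑ i, x i ^ 2 / 2) := by
  calc ∑ ε ∈ Fintype.piFinset fun _ : ι => ({-1, 1} : Finset ℝ), exp (∑ i, ε i * x i)
        = ∏ i, 2 * cosh (x i) := by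
          simp_rw [exp_sum]
          rw [← Finset.prod_univ_sum (t := fun _ => ({-1, 1} : Finset ℝ))
            (f := fun i e => exp (e * x i))]
          refine Finset.prod_congr rfl fun i _ => ?_
          rw [Finset.sum_pair (by norm_num), cosh_eq]
          ring_nf
    _ ≤ ∏ i, 2 * exp (x i ^ 2 / 2) := by
          gcongr with i
          exact cosh_le_exp_half_sq (x i)
    _ = 2 ^ Fintype.card ι * exp (∑ i, x i ^ 2 / 2) := by
          rw [Finset.prod_mul_distrib, Finset.prod_const, Finset.card_univ, exp_sum]

section UnitSphere

variable {d : ℕ} {μ : Measure (EuclideanSpace ℝ (Fin d))}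

lemma pos_of_norm_eq_one {w : EuclideanSpace ℝ (Fin d)} (hw : ‖w‖ = 1) : 0 < d := by
  refine Nat.pos_of_ne_zero ?_
  rintro rfl
  simp [Subsingleton.elim w 0] at hw

lemma integrable_exp_inner [IsFiniteMeasure μ] (hsphere : ∀ᵐ w ∂μ, ‖w‖ = 1)
    (v : EuclideanSpace ℝ (Fin d)) : Integrable (fun u => exp ⟪u, v⟫) μ := by
  refine Integrable.of_bound (C := exp ‖v‖) (by fun_prop) ?_
  filter_upwards [hsphere] with u hu
  rw [norm_of_nonneg (exp_pos _).le, exp_le_exp]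
  simpa [hu] using real_inner_le_norm u v

lemma norm_toLp_smul_of_mem_piFinset {ε : Fin d → ℝ}
    (hε : ε ∈ Fintype.piFinset fun _ : Fin d => ({-1, 1} : Finset ℝ)) (c : ℝ) :
    ‖(WithLp.toLp 2 (c • ε) : EuclideanSpace ℝ (Fin d))‖ = |c| * √d := by
  have hsq : ∀ i, ε i ^ 2 = 1 := fun i => by
    rcases Finset.mem_insert.1 (Fintype.mem_piFinset.1 hε i) with h | h <;> simp_all
  rw [EuclideanSpace.norm_eq, ← sqrt_sq_eq_abs, ← sqrt_mul (sq_nonneg c)]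
  simp [mul_pow, hsq, mul_comm]

lemma sum_exp_inner_smul_sign_le (u : EuclideanSpace ℝ (Fin d)) (c : ℝ) :
    ∑ ε ∈ Fintype.piFinset fun _ : Fin d => ({-1, 1} : Finset ℝ),
        exp ⟪u, (WithLp.toLp 2 (c • ε) : EuclideanSpace ℝ (Fin d))⟫
      ≤ 2 ^ d * exp (c ^ 2 * ‖u‖ ^ 2 / 2) := by
  have hinner : ∀ ε : Fin d → ℝ,
      ⟪u, (WithLp.toLp 2 (c • ε) : EuclideanSpace ℝ (Fin d))⟫ = ∑ i, ε i * (c * u i) :=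
    fun ε => by simp [PiLp.inner_apply, mul_assoc, mul_left_comm]
  have hsum : ∑ i, (c * u i) ^ 2 / 2 = c ^ 2 * ‖u‖ ^ 2 / 2 := by
    simp_rw [mul_pow, ← Finset.sum_div, ← Finset.mul_sum, EuclideanSpace.real_norm_sq_eq]
  simpa only [hinner, hsum, Fintype.card_fin] using sum_exp_sum_sign_mul_le fun i => c * u i

lemma integral_exp_inner_le [IsProbabilityMeasure μ] (hsphere : ∀ᵐ w ∂μ, ‖w‖ = 1)
    (hrot : ∀ O : EuclideanSpace ℝ (Fin d) ≃ₗᵢ[ℝ] EuclideanSpace ℝ (Fin d), μ.map O = μ)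
    (v : EuclideanSpace ℝ (Fin d)) :
    ∫ u, exp ⟪u, v⟫ ∂μ ≤ exp (‖v‖ ^ 2 / (2 * d)) := by
  obtain ⟨w₀, hw₀⟩ := hsphere.exists
  have hd : (0 : ℝ) < d := Nat.cast_pos.2 (pos_of_norm_eq_one hw₀)
  set S := Fintype.piFinset fun _ : Fin d => ({-1, 1} : Finset ℝ)
  set c := ‖v‖ / √d
  let σ : (Fin d → ℝ) → EuclideanSpace ℝ (Fin d) := fun ε => WithLp.toLp 2 (c • ε)
  have norm_σ : ∀ ε ∈ S, ‖σ ε‖ = ‖v‖ := fun ε hε => by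
    rw [norm_toLp_smul_of_mem_piFinset hε, abs_of_nonneg (by positivity),
      div_mul_cancel₀ _ (by positivity)]
  have hc : c ^ 2 / 2 = ‖v‖ ^ 2 / (2 * d) := by
    rw [div_pow, sq_sqrt hd.le]; ring
  have hS : (S.card : ℝ) = 2 ^ d := by
    rw [Fintype.card_piFinset_const, Finset.card_pair (by norm_num)]
    norm_num
  refine le_of_mul_le_mul_left ?_ (by positivity : (0 : ℝ) < 2 ^ d)
  calc 2 ^ d * ∫ u, exp ⟪u, v⟫ ∂μ = ∑ ε ∈ S, ∫ u, exp ⟪u, σ ε⟫ ∂μ := by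
        rw [Finset.sum_congr rfl fun ε hε =>
          integral_comp_inner_eq_of_norm_eq hrot exp (norm_σ ε hε),
          Finset.sum_const, nsmul_eq_mul, hS]
    _ = ∫ u, ∑ ε ∈ S, exp ⟪u, σ ε⟫ ∂μ :=
        (integral_finsetSum _ fun ε _ => integrable_exp_inner hsphere _).symm
    _ ≤ ∫ _, 2 ^ d * exp (‖v‖ ^ 2 / (2 * d)) ∂μ := by
        refine integral_mono_of_nonneg (ae_of_all _ fun u => by positivity) (integrable_const _)
          (hsphere.mono fun u hu => ?_)
        simpa only [hu, one_pow, mul_one, hc] using sum_exp_inner_smul_sign_le u c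
    _ = 2 ^ d * exp (‖v‖ ^ 2 / (2 * d)) := by simp

lemma hasSubgaussianMGF_inner [IsProbabilityMeasure μ] (hsphere : ∀ᵐ w ∂μ, ‖w‖ = 1)
    (hrot : ∀ O : EuclideanSpace ℝ (Fin d) ≃ₗᵢ[ℝ] EuclideanSpace ℝ (Fin d), μ.map O = μ)
    (v : EuclideanSpace ℝ (Fin d)) :
    HasSubgaussianMGF (fun u => ⟪u, v⟫) (‖v‖₊ ^ 2 / d) μ where
  integrable_exp_mul t := by
    simpa only [← inner_smul_right] using integrable_exp_inner hsphere (t • v)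
  mgf_le t := by
    have := integral_exp_inner_le hsphere hrot (t • v)
    simp only [mgf, ← inner_smul_right]
    convert this using 2
    push_cast
    rw [norm_smul, Real.norm_eq_abs, mul_pow, sq_abs]
    ring

lemma hasSubgaussianMGF_apply [IsProbabilityMeasure μ] (hsphere : ∀ᵐ w ∂μ, ‖w‖ = 1)
    (hrot : ∀ O : EuclideanSpace ℝ (Fin d) ≃ₗᵢ[ℝ] EuclideanSpace ℝ (Fin d), μ.map O = μ)
    (i : Fin d) : HasSubgaussianMGF (fun u => u i) (d : ℝ≥0)⁻¹ μ := by
  simpa [EuclideanSpace.inner_single_right] using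
    hasSubgaussianMGF_inner hsphere hrot (EuclideanSpace.single i 1)

end UnitSphere

namespace ProbabilityTheory.HasSubgaussianMGF

variable {Ω : Type*} {mΩ : MeasurableSpace Ω} {μ : Measure Ω} {X : Ω → ℝ} {c : ℝ≥0}

lemma measureReal_abs_ge_le [IsFiniteMeasure μ] (h : HasSubgaussianMGF X c μ) {ε : ℝ}
    (hε : 0 ≤ ε) : μ.real {ω | ε ≤ |X ω|} ≤ 2 * exp (-ε ^ 2 / (2 * c)) := by
  have hsub : {ω | ε ≤ |X ω|} ⊆ {ω | ε ≤ X ω} ∪ {ω | ε ≤ (-X) ω} :=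
    fun ω (hω : ε ≤ |X ω|) => le_abs.1 hω
  calc μ.real {ω | ε ≤ |X ω|} ≤ μ.real {ω | ε ≤ X ω} + μ.real {ω | ε ≤ (-X) ω} :=
        (measureReal_mono hsub).trans (measureReal_union_le _ _)
    _ ≤ exp (-ε ^ 2 / (2 * c)) + exp (-ε ^ 2 / (2 * c)) :=
        add_le_add (h.measure_ge_le hε) (h.neg.measure_ge_le hε)
    _ = 2 * exp (-ε ^ 2 / (2 * c)) := by ring

lemma integrable_max_sq_sub_sq [IsFiniteMeasure μ] (h : HasSubgaussianMGF X c μ) (a : ℝ) :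
    Integrable (fun ω => max (X ω ^ 2 - a ^ 2) 0) μ :=
  ((h.memLp 2).integrable_sq.sub (integrable_const _)).pos_part

lemma integral_max_sq_sub_sq_le [IsFiniteMeasure μ] (h : HasSubgaussianMGF X c μ) (hc : 0 < c)
    (a : ℝ) : ∫ ω, max (X ω ^ 2 - a ^ 2) 0 ∂μ ≤ 4 * c * exp (-a ^ 2 / (2 * c)) := by
  have hc' : (0 : ℝ) < c := hc
  have tail : ∀ t ∈ Set.Ioi (0 : ℝ),
      μ.real {ω | t < max (X ω ^ 2 - a ^ 2) 0} ≤ 2 * exp (-(a ^ 2 + t) / (2 * c)) := by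
    intro t (ht : 0 < t)
    have hsub : {ω | t < max (X ω ^ 2 - a ^ 2) 0} ⊆ {ω | √(a ^ 2 + t) ≤ |X ω|} := by
      intro ω (hω : t < max (X ω ^ 2 - a ^ 2) 0)
      have : a ^ 2 + t < X ω ^ 2 := by
        rcases lt_max_iff.1 hω with h | h <;> linarith
      exact (sqrt_le_sqrt this.le).trans_eq (sqrt_sq_eq_abs _)
    calc μ.real {ω | t < max (X ω ^ 2 - a ^ 2) 0} ≤ μ.real {ω | √(a ^ 2 + t) ≤ |X ω|} :=
          measureReal_mono hsub
      _ ≤ 2 * exp (-(a ^ 2 + t) / (2 * c)) := by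
          have := h.measureReal_abs_ge_le (sqrt_nonneg (a ^ 2 + t))
          rwa [sq_sqrt (by positivity)] at this
  have hdecay : ∀ t : ℝ, 2 * exp (-(a ^ 2 + t) / (2 * c))
      = 2 * exp (-a ^ 2 / (2 * c)) * exp (-(2 * (c : ℝ))⁻¹ * t) := fun t => by
    rw [mul_assoc, ← exp_add]; congr 2; field_simp; ring
  calc ∫ ω, max (X ω ^ 2 - a ^ 2) 0 ∂μ
        = ∫ t in Set.Ioi 0, μ.real {ω | t < max (X ω ^ 2 - a ^ 2) 0} :=
          (h.integrable_max_sq_sub_sq a).integral_eq_integral_meas_lt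
            (ae_of_all _ fun _ => le_max_right _ _)
    _ ≤ ∫ t in Set.Ioi 0, 2 * exp (-(a ^ 2 + t) / (2 * c)) := by
          refine integral_mono_of_nonneg (ae_of_all _ fun _ => measureReal_nonneg) ?_
            ((ae_restrict_iff' measurableSet_Ioi).2 (ae_of_all _ tail))
          simp_rw [hdecay]
          exact (exp_neg_integrableOn_Ioi 0 (by positivity)).const_mul _
    _ = 4 * c * exp (-a ^ 2 / (2 * c)) := by
          simp_rw [hdecay, integral_const_mul]
          rw [integral_exp_mul_Ioi (by simpa using hc') 0, mul_zero, exp_zero]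
          field_simp
          ring

end ProbabilityTheory.HasSubgaussianMGF

lemma sq_sub_truncCoord_le {a : ℝ} (ha : 0 ≤ a) (t : ℝ) :
    (t - truncCoord a t) ^ 2 ≤ max (t ^ 2 - a ^ 2) 0 := by
  unfold truncCoord
  split_ifs with hle hgt
  · simp
  · exact le_max_of_le_left (by nlinarith)
  · have : t < -a := by cases abs_cases t <;> linarith
    exact le_max_of_le_left (by nlinarith)

lemma norm_sub_truncVec_sq (d : ℕ) (a : ℝ) (w : EuclideanSpace ℝ (Fin d)) :
    ‖w - truncVec d a w‖ ^ 2 = ∑ i, (w i - truncCoord a (w i)) ^ 2 := by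
  simp [EuclideanSpace.real_norm_sq_eq, truncVec]

theorem stmt_3_general (d : ℕ) (a : ℝ) (ha : 0 < a)
    (μ : Measure (EuclideanSpace ℝ (Fin d))) [IsProbabilityMeasure μ]
    (hsphere : ∀ᵐ w ∂μ, ‖w‖ = 1)
    (hrot : ∀ O : EuclideanSpace ℝ (Fin d) ≃ₗᵢ[ℝ] EuclideanSpace ℝ (Fin d),
      Measure.map O μ = μ) :
    ∫ w, ‖w - truncVec d a w‖ ^ 2 ∂μ ≤ 4 * Real.exp (-(d : ℝ) * a ^ 2 / 2) := by
  obtain ⟨w₀, hw₀⟩ := hsphere.exists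
  have hd : 0 < d := pos_of_norm_eq_one hw₀
  have hcoord := hasSubgaussianMGF_apply hsphere hrot
  have hint i := (hcoord i).integrable_max_sq_sub_sq a
  calc ∫ w, ‖w - truncVec d a w‖ ^ 2 ∂μ ≤ ∫ w, ∑ i, max (w i ^ 2 - a ^ 2) 0 ∂μ := by
        refine integral_mono_of_nonneg (ae_of_all _ fun _ => by positivity)
          (integrable_finsetSum _ fun i _ => hint i) (ae_of_all _ fun w => ?_)
        simp only [norm_sub_truncVec_sq]
        exact Finset.sum_le_sum fun i _ => sq_sub_truncCoord_le ha.le _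
    _ = ∑ i, ∫ w, max (w i ^ 2 - a ^ 2) 0 ∂μ := integral_finsetSum _ fun i _ => hint i
    _ ≤ ∑ _i : Fin d, 4 * ((d : ℝ≥0)⁻¹ : ℝ≥0) * exp (-a ^ 2 / (2 * ((d : ℝ≥0)⁻¹ : ℝ≥0))) :=
        Finset.sum_le_sum fun i _ =>
          (hcoord i).integral_max_sq_sub_sq_le (by positivity) a
    _ = 4 * exp (-(d : ℝ) * a ^ 2 / 2) := by
        simp only [Finset.sum_const, Finset.card_univ, Fintype.card_fin, nsmul_eq_mul,
          NNReal.coe_inv, NNReal.coe_natCast]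
        field_simp

/-- The expected squared ℓ₂-norm of the residual after truncating a uniformly random
unit vector is at most `4 exp(-d a²/2)`. The uniform distribution on the unit sphere
is characterized as a rotation-invariant probability measure supported on the sphere. -/
theorem stmt_3 (d : ℕ) (hd : 1 ≤ d) (a : ℝ) (ha : 0 < a)
    (μ : Measure (EuclideanSpace ℝ (Fin d))) [IsProbabilityMeasure μ]
    (hsphere : ∀ᵐ w ∂μ, ‖w‖ = 1)
    (hrot : ∀ O : EuclideanSpace ℝ (Fin d) ≃ₗᵢ[ℝ] EuclideanSpace ℝ (Fin d),
      Measure.map O μ = μ) :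
    ∫ w, ‖w - truncVec d a w‖ ^ 2 ∂μ ≤ 4 * Real.exp (-(d : ℝ) * a ^ 2 / 2) :=
  stmt_3_general d a ha μ hsphere hrot
end

section
/- Let d ≥ 1, n ≥ 1 a real number, and q ∈ (1, 2). Let u ∈ ℝ^d with u_i ∈ [0, 1] for all i, and let v′ ∈ ℝ^d satisfy |v′_i − u_i| ≤ max{ 1/n, √(u_i/n) } for every i ∈ [d]. Define v ∈ ℝ^d by v_i = v′_i if |v′_i| ≥ 2/n and v_i = 0 otherwise, and set z = u − v. Then Σ_{i=1}^d |z_i|^q ≤ Σ_{i=1}^d ( u_i · 1[u_i < 4/n] )^q + n^{−q/2} · Σ_{i=1}^d ( u_i · 1[u_i ≥ 1/n] )^{q/2}. -/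
lemma key_pt (n : ℝ) (hn : 1 ≤ n) (q : ℝ) (hq1 : 1 < q) (hq2 : q < 2)
    (a b : ℝ) (ha0 : 0 ≤ a) (ha1 : a ≤ 1)
    (hb : |b - a| ≤ max (1 / n) (Real.sqrt (a / n))) :
    |a - (if 2 / n ≤ |b| then b else 0)| ^ q ≤
      (a * if a < 4 / n then 1 else 0) ^ q +
        n ^ (-(q / 2)) * (a * if 1 / n ≤ a then 1 else 0) ^ (q / 2) := by
  have hn0 : (0:ℝ) < n := lt_of_lt_of_le one_pos hn
  have hq0 : (0:ℝ) ≤ q := by linarith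
  by_cases h2 : 2 / n ≤ |b|
  · -- v = b case: show 1/n ≤ a and |a - b| ≤ √(a/n)
    have h1n : 1 / n ≤ a := by
      by_contra hcon
      push_neg at hcon
      have hs : Real.sqrt (a / n) ≤ 1 / n := by
        rw [show (1:ℝ)/n = Real.sqrt ((1/n)^2) by
          rw [Real.sqrt_sq (by positivity)]]
        apply Real.sqrt_le_sqrt
        rw [div_pow, one_pow, div_le_div_iff₀ hn0 (by positivity)]
        have h' : a * n < 1 := by rw [← lt_div_iff₀ hn0]; exact hcon
        nlinarith [mul_le_mul_of_nonneg_right h'.le hn0.le]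
      have hmax : max (1 / n) (Real.sqrt (a / n)) ≤ 1 / n := max_le le_rfl hs
      have htri : |b| ≤ |b - a| + a := by
        calc |b| = |(b - a) + a| := by ring_nf
        _ ≤ |b - a| + |a| := abs_add_le _ _
        _ = |b - a| + a := by rw [abs_of_nonneg ha0]
      have : 2 / n < 2 / n := by
        calc 2 / n ≤ |b| := h2
        _ ≤ |b - a| + a := htri
        _ ≤ 1/n + a := by linarith [le_trans hb hmax]
        _ < 1/n + 1/n := by linarith
        _ = 2/n := by ring
      exact lt_irrefl _ this
    have hsq : 1 / n ≤ Real.sqrt (a / n) := by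
      rw [show (1:ℝ)/n = Real.sqrt ((1/n)^2) by rw [Real.sqrt_sq (by positivity)]]
      apply Real.sqrt_le_sqrt
      rw [div_pow, one_pow, div_le_div_iff₀ (by positivity) hn0]
      have h : 1 ≤ a * n := by rw [← div_le_iff₀ hn0]; exact h1n
      nlinarith [mul_le_mul_of_nonneg_right h hn0.le]
    have hmax : max (1 / n) (Real.sqrt (a / n)) = Real.sqrt (a / n) :=
      max_eq_right hsq
    have hzb : |a - b| ≤ Real.sqrt (a / n) := by
      rw [abs_sub_comm]; rw [hmax] at hb; exact hb
    have hrp : |a - b| ^ q ≤ (Real.sqrt (a / n)) ^ q :=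
      Real.rpow_le_rpow (abs_nonneg _) hzb hq0
    have hre : (Real.sqrt (a / n)) ^ q = n ^ (-(q/2)) * a ^ (q/2) := by
      rw [Real.sqrt_eq_rpow, ← Real.rpow_mul (by positivity)]
      rw [show (1/2 : ℝ) * q = q / 2 by ring]
      rw [Real.div_rpow ha0 (le_of_lt hn0), Real.rpow_neg (le_of_lt hn0)]
      ring
    simp only [if_pos h2, if_pos h1n, mul_one]
    have hfirst : (0:ℝ) ≤ (a * if a < 4 / n then 1 else 0) ^ q := by
      apply Real.rpow_nonneg
      split_ifs <;> simp [ha0]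
    calc |a - b| ^ q ≤ n ^ (-(q/2)) * a ^ (q/2) := by rw [← hre]; exact hrp
    _ ≤ (a * if a < 4 / n then 1 else 0) ^ q + n ^ (-(q/2)) * a ^ (q/2) := by
        linarith
  · -- v = 0 case: show a < 4/n
    have h4 : a < 4 / n := by
      by_contra hcon
      push_neg at hcon
      push_neg at h2
      have hs : Real.sqrt (a / n) ≤ a - 2/n := by
        have hpos : (0:ℝ) ≤ a - 2/n := by
          have h2n : 2/n ≤ 4/n := by gcongr; norm_num
          linarith
        rw [show a - 2/n = Real.sqrt ((a - 2/n)^2) by rw [Real.sqrt_sq hpos]]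
        apply Real.sqrt_le_sqrt
        rw [div_le_iff₀ hn0]
        have h4 : 4 ≤ a * n := by rw [← div_le_iff₀ hn0]; exact hcon
        have hhalf : a / 2 ≤ a - 2 / n := by
          have : 2 / n ≤ a / 2 := by
            rw [div_le_div_iff₀ hn0 (by norm_num)]; linarith
          linarith
        have h1 : (a/2)^2 ≤ (a - 2/n)^2 := by nlinarith [ha0]
        have h2' := mul_le_mul_of_nonneg_right h1 hn0.le
        nlinarith [mul_le_mul_of_nonneg_left h4 ha0]
      have h1s : 1/n ≤ a - 2/n := by
        have h34 : 3/n ≤ 4/n := by gcongr; norm_num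
        have hsum : 1/n + 2/n = 3/n := by ring
        linarith
      have hmax : max (1 / n) (Real.sqrt (a / n)) ≤ a - 2/n := max_le h1s hs
      have htri : a ≤ |b| + |b - a| := by
        calc a = |a| := (abs_of_nonneg ha0).symm
        _ = |b + (a - b)| := by ring_nf
        _ ≤ |b| + |a - b| := abs_add_le _ _
        _ = |b| + |b - a| := by rw [abs_sub_comm]
      have : a < a := by
        calc a ≤ |b| + |b - a| := htri
        _ < 2/n + (a - 2/n) := by
            have := le_trans hb hmax; linarith
        _ = a := by ring
      exact lt_irrefl _ this
    simp only [if_neg h2, if_pos h4, mul_one, sub_zero]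
    rw [abs_of_nonneg ha0]
    have hsecond : (0:ℝ) ≤ n ^ (-(q/2)) * (a * if 1 / n ≤ a then 1 else 0) ^ (q/2) := by
      apply mul_nonneg (Real.rpow_nonneg (le_of_lt hn0) _)
      apply Real.rpow_nonneg
      split_ifs <;> simp [ha0]
    linarith

/-- Error decomposition for coordinatewise VSTAT estimation with zeroing of small entries. -/
theorem stmt_5 (d : ℕ) (hd : 1 ≤ d) (n : ℝ) (hn : 1 ≤ n) (q : ℝ) (hq1 : 1 < q) (hq2 : q < 2)
    (u v' v z : Fin d → ℝ)
    (hu : ∀ i, u i ∈ Set.Icc (0 : ℝ) 1)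
    (hv' : ∀ i, |v' i - u i| ≤ max (1 / n) (Real.sqrt (u i / n)))
    (hv : ∀ i, v i = if 2 / n ≤ |v' i| then v' i else 0)
    (hz : ∀ i, z i = u i - v i) :
    ∑ i, |z i| ^ q ≤
      (∑ i, (u i * if u i < 4 / n then 1 else 0) ^ q) +
        n ^ (-(q / 2)) * ∑ i, (u i * if 1 / n ≤ u i then 1 else 0) ^ (q / 2) := by
  have key : ∀ i : Fin d, |z i| ^ q ≤
      (u i * if u i < 4 / n then 1 else 0) ^ q +
        n ^ (-(q / 2)) * (u i * if 1 / n ≤ u i then 1 else 0) ^ (q / 2) := by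
    intro i
    rw [hz i, hv i]
    exact key_pt n hn q hq1 hq2 (u i) (v' i) (hu i).1 (hu i).2 (hv' i)
  calc ∑ i, |z i| ^ q
      ≤ ∑ i, ((u i * if u i < 4 / n then 1 else 0) ^ q +
        n ^ (-(q / 2)) * (u i * if 1 / n ≤ u i then 1 else 0) ^ (q / 2)) :=
        Finset.sum_le_sum (fun i _ => key i)
    _ = _ := by rw [Finset.sum_add_distrib, Finset.mul_sum]
end

section
/- Let d ≥ 1, t ≥ 1 a real number, b ∈ ℝ^d, and let V ⊆ {−1, 1}^d be a nonempty finite set with |V| ≥ 2^d / t. Then (1/|V|) · Σ_{v ∈ V} | Σ_{i=1}^d v_i b_i | ≤ √2 · (2 + √(ln t)) · ‖b‖₂, where ‖b‖₂ = (Σ_i b_i²)^{1/2}. -/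
/-!
For every real `c`, Jensen's inequality for `exp` and `e^{c|x|} ≤ e^{cx} + e^{-cx}` give
`exp (c · avg_V |⟪v, b⟫|) ≤ |V|⁻¹ ∑_{v ∈ {±1}^d} 2 e^{c⟪v, b⟫} ≤ 2t · e^{c²‖b‖²/2}`,
the last step by Hoeffding's bound `cosh x ≤ e^{x²/2}` applied coordinatewise.
So `c · avg ≤ log (2t) + c²‖b‖²/2` for all `c`; optimising in `c` gives
`avg ≤ √(2 log (2t)) ‖b‖ ≤ √2 (2 + √(log t)) ‖b‖`.
-/

open Finset Real

lemma sum_exp_mul_pm_one_le (x : ℝ) :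
    ∑ s ∈ ({1, -1} : Finset ℝ), exp (s * x) ≤ 2 * exp (x ^ 2 / 2) := by
  have hcosh := cosh_le_exp_half_sq x
  rw [cosh_eq] at hcosh
  rw [sum_pair (by norm_num), one_mul, neg_one_mul]
  linarith

lemma exp_average_le_average_exp {α : Type*} {s : Finset α} (hs : s.Nonempty) (f : α → ℝ) :
    exp (1 / #s * ∑ a ∈ s, f a) ≤ 1 / #s * ∑ a ∈ s, exp (f a) := by
  have hw : ∑ _a ∈ s, (1 / #s : ℝ) = 1 := by
    rw [sum_const, nsmul_eq_mul, mul_one_div_cancel (by exact_mod_cast hs.card_pos.ne')]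
  simpa only [mul_sum, smul_eq_mul] using
    convexOn_exp.map_sum_le (fun _ _ ↦ by positivity) hw fun _ _ ↦ Set.mem_univ _

section SignVectors

variable {ι : Type*} [Fintype ι] {V : Finset (ι → ℝ)}

theorem sum_exp_mul_sum_le
    (hV : ∀ v ∈ V, ∀ i, v i = 1 ∨ v i = -1) (b : ι → ℝ) (c : ℝ) :
    ∑ v ∈ V, exp (c * ∑ i, v i * b i) ≤
      2 ^ Fintype.card ι * exp (c ^ 2 * (∑ i, b i ^ 2) / 2) := by
  classical
  have hV_sub : V ⊆ Fintype.piFinset fun _ ↦ ({1, -1} : Finset ℝ) := fun v hv ↦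
    Fintype.mem_piFinset.2 fun i ↦ by rcases hV v hv i with h | h <;> simp [h]
  calc ∑ v ∈ V, exp (c * ∑ i, v i * b i)
      ≤ ∑ v ∈ Fintype.piFinset fun _ ↦ ({1, -1} : Finset ℝ), exp (c * ∑ i, v i * b i) :=
        sum_le_sum_of_subset_of_nonneg hV_sub fun _ _ _ ↦ (exp_pos _).le
    _ = ∏ i, ∑ s ∈ ({1, -1} : Finset ℝ), exp (s * (c * b i)) := by
        rw [prod_univ_sum]
        refine sum_congr rfl fun v _ ↦ ?_
        rw [mul_sum, exp_sum]
        exact prod_congr rfl fun i _ ↦ by rw [mul_left_comm]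
    _ ≤ ∏ i, 2 * exp ((c * b i) ^ 2 / 2) :=
        prod_le_prod (fun _ _ ↦ sum_nonneg fun _ _ ↦ (exp_pos _).le)
          fun i _ ↦ sum_exp_mul_pm_one_le _
    _ = 2 ^ Fintype.card ι * exp (c ^ 2 * (∑ i, b i ^ 2) / 2) := by
        rw [prod_mul_distrib, prod_const, ← exp_sum, card_univ, mul_sum, sum_div]
        simp only [mul_pow]

theorem mul_average_abs_sum_le
    (hV : ∀ v ∈ V, ∀ i, v i = 1 ∨ v i = -1) (hVne : V.Nonempty) (b : ι → ℝ) (c : ℝ) :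
    c * (1 / #V * ∑ v ∈ V, |∑ i, v i * b i|) ≤
      log (2 * 2 ^ Fintype.card ι / #V) + c ^ 2 * (∑ i, b i ^ 2) / 2 := by
  set X : (ι → ℝ) → ℝ := fun v ↦ ∑ i, v i * b i
  set S := ∑ i, b i ^ 2
  have hV_pos : (0 : ℝ) < #V := by exact_mod_cast hVne.card_pos
  rw [← log_exp (c ^ 2 * S / 2), ← log_mul (by positivity) (exp_pos _).ne',
    le_log_iff_exp_le (by positivity)]
  calc exp (c * (1 / #V * ∑ v ∈ V, |X v|))
      = exp (1 / #V * ∑ v ∈ V, c * |X v|) := by rw [← mul_sum, mul_left_comm]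
    _ ≤ 1 / #V * ∑ v ∈ V, exp (c * |X v|) := exp_average_le_average_exp hVne _
    _ ≤ 1 / #V * (∑ v ∈ V, exp (c * X v) + ∑ v ∈ V, exp (-c * X v)) := by
        rw [← sum_add_distrib]
        gcongr with v
        rcases abs_choice (X v) with h | h <;> simp [h, exp_nonneg]
    _ ≤ 1 / #V * (2 ^ Fintype.card ι * exp (c ^ 2 * S / 2)
          + 2 ^ Fintype.card ι * exp ((-c) ^ 2 * S / 2)) := by
        gcongr <;> exact sum_exp_mul_sum_le hV b _
    _ = 2 * 2 ^ Fintype.card ι / #V * exp (c ^ 2 * S / 2) := by rw [neg_sq]; ring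

end SignVectors

lemma le_sqrt_of_forall_mul_le {A L S : ℝ} (hL : 0 < L)
    (h : ∀ c, c * A ≤ L + c ^ 2 * S / 2) : A ≤ √(2 * L * S) := by
  rcases le_or_gt A 0 with hA | hA
  · exact hA.trans (sqrt_nonneg _)
  rw [le_sqrt' hA]
  have := h (2 * L / A)
  field_simp at this
  nlinarith

lemma sqrt_log_two_mul_le {t : ℝ} (ht : 1 ≤ t) : √(log (2 * t)) ≤ 2 + √(log t) := by
  have hlog_t : 0 ≤ log t := log_nonneg ht
  rw [sqrt_le_iff, log_mul two_ne_zero (by positivity)]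
  refine ⟨by positivity, ?_⟩
  have := log_two_lt_d9
  nlinarith [sq_sqrt hlog_t, sqrt_nonneg (log t)]

theorem stmt_6_general (d : ℕ) (t : ℝ) (ht : 1 ≤ t) (b : Fin d → ℝ)
    (V : Finset (Fin d → ℝ))
    (hVpm : ∀ v ∈ V, ∀ i, v i = 1 ∨ v i = -1)
    (hVne : V.Nonempty)
    (hVcard : (2 : ℝ) ^ d / t ≤ V.card) :
    (1 / (V.card : ℝ)) * ∑ v ∈ V, |∑ i, v i * b i| ≤
      Real.sqrt 2 * (2 + Real.sqrt (Real.log t)) * Real.sqrt (∑ i, (b i) ^ 2) := by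
  have hV_pos : (0 : ℝ) < #V := by exact_mod_cast hVne.card_pos
  have hcard : 2 * 2 ^ d / (#V : ℝ) ≤ 2 * t := by
    rw [div_le_iff₀ hV_pos, mul_assoc, mul_le_mul_iff_right₀ two_pos, ← div_le_iff₀' (by linarith)]
    exact hVcard
  have hlog : 0 < log (2 * t) := log_pos (by linarith)
  calc _ ≤ √(2 * log (2 * t) * ∑ i, b i ^ 2) :=
        le_sqrt_of_forall_mul_le hlog fun c ↦ (mul_average_abs_sum_le hVpm hVne b c).trans <| by
          rw [Fintype.card_fin]; gcongr
    _ = √2 * √(log (2 * t)) * √(∑ i, b i ^ 2) := by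
        rw [sqrt_mul (by positivity), sqrt_mul zero_le_two]
    _ ≤ _ := by gcongr; exact sqrt_log_two_mul_le ht

/-- Averaging bound over large subsets of the Boolean hypercube. -/
theorem stmt_6 (d : ℕ) (hd : 1 ≤ d) (t : ℝ) (ht : 1 ≤ t) (b : Fin d → ℝ)
    (V : Finset (Fin d → ℝ))
    (hVpm : ∀ v ∈ V, ∀ i, v i = 1 ∨ v i = -1)
    (hVne : V.Nonempty)
    (hVcard : (2 : ℝ) ^ d / t ≤ V.card) :
    (1 / (V.card : ℝ)) * ∑ v ∈ V, |∑ i, v i * b i| ≤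
      Real.sqrt 2 * (2 + Real.sqrt (Real.log t)) * Real.sqrt (∑ i, (b i) ^ 2) :=
  stmt_6_general d t ht b V hVpm hVne hVcard
end

section
/- Let E be a real normed space with continuous dual E*, let K ⊆ E be a convex set, let η > 0 and 0 < κ ≤ L₁. Let F : K → ℝ and ∇F : K → E* satisfy, for all x, y ∈ K: (strong convexity) F(y) ≥ F(x) + ∇F(x)(y − x) + (κ/2)‖y − x‖², and (smoothness) F(y) ≤ F(x) + ∇F(x)(y − x) + (L₁/2)‖y − x‖². Let g̃ : K → E* satisfy ‖g̃(x) − ∇F(x)‖ ≤ √(ηκ)/2 for all x ∈ K (operator norm), and let F̃ : K → ℝ satisfy η/4 ≤ F(x) − F̃(x) ≤ 3η/4 for all x ∈ K. Then for all x, y ∈ K: (κ/4)·‖y − x‖² ≤ F(y) − [ F̃(x) + g̃(x)(y − x) ] ≤ L₁·‖y − x‖² + η. -/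
/-- A gradient estimate accurate to `√(ηκ)/2` in the dual norm, together with a suitably
shifted value estimate, constitutes a first-order `(η, 2L₁, κ/2)`-oracle for a `κ`-strongly
convex function with `L₁`-Lipschitz gradient. -/
theorem stmt_7 {E : Type*} [NormedAddCommGroup E] [NormedSpace ℝ E]
    (K : Set E) (hK : Convex ℝ K)
    (η κ L₁ : ℝ) (hη : 0 < η) (hκ : 0 < κ) (hκL : κ ≤ L₁)
    (F : E → ℝ) (gradF : E → (E →L[ℝ] ℝ))
    (hstrong : ∀ x ∈ K, ∀ y ∈ K, F y ≥ F x + gradF x (y - x) + κ / 2 * ‖y - x‖ ^ 2)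
    (hsmooth : ∀ x ∈ K, ∀ y ∈ K, F y ≤ F x + gradF x (y - x) + L₁ / 2 * ‖y - x‖ ^ 2)
    (gtil : E → (E →L[ℝ] ℝ))
    (hgtil : ∀ x ∈ K, ‖gtil x - gradF x‖ ≤ Real.sqrt (η * κ) / 2)
    (Ftil : E → ℝ)
    (hFtil : ∀ x ∈ K, η / 4 ≤ F x - Ftil x ∧ F x - Ftil x ≤ 3 * η / 4) :
    ∀ x ∈ K, ∀ y ∈ K,
      κ / 4 * ‖y - x‖ ^ 2 ≤ F y - (Ftil x + gtil x (y - x)) ∧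
      F y - (Ftil x + gtil x (y - x)) ≤ L₁ * ‖y - x‖ ^ 2 + η := by
  intro x hx y hy
  have hstr := hstrong x hx y hy
  have hsm := hsmooth x hx y hy
  have hF := hFtil x hx
  set r := ‖y - x‖ with hr
  have hr0 : 0 ≤ r := norm_nonneg _
  have hdiff : |gtil x (y - x) - gradF x (y - x)| ≤ Real.sqrt (η * κ) / 2 * r := by
    have h1 : gtil x (y - x) - gradF x (y - x) = (gtil x - gradF x) (y - x) := by simp
    rw [h1]
    calc |(gtil x - gradF x) (y - x)| = ‖(gtil x - gradF x) (y - x)‖ := rfl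
      _ ≤ ‖gtil x - gradF x‖ * r := (gtil x - gradF x).le_opNorm _
      _ ≤ Real.sqrt (η * κ) / 2 * r := by
          apply mul_le_mul_of_nonneg_right (hgtil x hx) hr0
  have hamgm : Real.sqrt (η * κ) / 2 * r ≤ η / 4 + κ / 4 * r ^ 2 := by
    have h1 : Real.sqrt (η * κ) = Real.sqrt η * Real.sqrt κ := Real.sqrt_mul hη.le _
    have h2 : Real.sqrt η ^ 2 = η := Real.sq_sqrt hη.le
    have h3 : Real.sqrt κ ^ 2 = κ := Real.sq_sqrt hκ.le
    nlinarith [sq_nonneg (Real.sqrt η - Real.sqrt κ * r)]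
  have habs := abs_le.mp hdiff
  constructor
  · nlinarith [habs.1, habs.2, hF.1]
  · nlinarith [habs.1, habs.2, hF.2]
end

section
/- Let E be a real normed space with continuous dual E*, let K ⊆ E be a convex set, let η > 0 and L₀ > 0. Let F : K → ℝ and ∇F : K → E* satisfy the Lipschitz-type subgradient inequality F(y) ≤ F(x) + ∇F(x)(y − x) + L₀·‖y − x‖ for all x, y ∈ K. Then for all x, y ∈ K: F(y) − [ F(x) + ∇F(x)(y − x) ] ≤ (L₀²/η)·‖x − y‖² + η/4. -/
/-- A Lipschitz convex function behaves, up to an additive error `η/4`, as if its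
gradient were Lipschitz with constant `2L₀²/η`. -/
theorem stmt_8 {E : Type*} [NormedAddCommGroup E] [NormedSpace ℝ E]
    (K : Set E) (hK : Convex ℝ K)
    (η L₀ : ℝ) (hη : 0 < η) (hL₀ : 0 < L₀)
    (F : E → ℝ) (gradF : E → (E →L[ℝ] ℝ))
    (hlip : ∀ x ∈ K, ∀ y ∈ K, F y ≤ F x + gradF x (y - x) + L₀ * ‖y - x‖) :
    ∀ x ∈ K, ∀ y ∈ K,
      F y - (F x + gradF x (y - x)) ≤ L₀ ^ 2 / η * ‖x - y‖ ^ 2 + η / 4 := by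
  intro x hx y hy
  have h := hlip x hx y hy
  have hn : ‖x - y‖ = ‖y - x‖ := norm_sub_rev x y
  have key : L₀ * ‖y - x‖ ≤ L₀ ^ 2 / η * ‖y - x‖ ^ 2 + η / 4 := by
    have h2 : (L₀ * ‖y - x‖ - η / 2) ^ 2 ≥ 0 := sq_nonneg _
    rw [div_mul_eq_mul_div, div_add' _ _ _ hη.ne', le_div_iff₀ hη]
    nlinarith
  rw [hn]; linarith
end

section
/- Let E be a real normed space with continuous dual E*, K ⊆ E a nonempty convex set, r ∈ [2, ∞), s defined by 1/r + 1/s = 1, L₀ > 0, η ≥ 0, D > 0, and T ≥ 1 an integer. Let Ψ : K → ℝ be nonnegative with Ψ(x) ≤ D for all x ∈ K, and let DΨ : K → E* satisfy the r-uniform convexity inequality Ψ(y) ≥ Ψ(x) + DΨ(x)(y − x) + (1/r)‖y − x‖^r for all x, y ∈ K; define the prox-function V_x(y) = Ψ(y) − Ψ(x) − DΨ(x)(y − x). Let F : K → ℝ be convex on K, and ∇F : K → E* satisfy F(u) ≥ F(x) + ∇F(x)(u − x) for all x, u ∈ K. Let g̃ : K → E* satisfy, for all x, y, u ∈ K, |(g̃(x)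 − ∇F(x))(y − u)| ≤ η and ‖g̃(x)‖ ≤ L₀. Set α = (1/L₀)·(rD/T)^{1 − 1/r}. Let x⁰ ∈ K satisfy DΨ(x⁰)(u − x⁰) ≥ 0 for all u ∈ K, and for t = 0, 1, …, T−1 let x^{t+1} ∈ K satisfy the prox-step optimality condition ( α·g̃(x^t) + DΨ(x^{t+1}) − DΨ(x^t) )(u − x^{t+1}) ≥ 0 for all u ∈ K. Then the average x̄ = (1/T)·Σ_{t=0}^{T−1} x^t satisfies, for every u ∈ K: F(x̄) − F(u) ≤ L₀·(rD/T)^{1/r} + η. -/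
/-!
The prox-step optimality condition gives the three-point inequality
`α g̃(xₜ)(xₜ₊₁ - u) ≤ V_{xₜ}(u) - V_{xₜ₊₁}(u) - V_{xₜ}(xₜ₊₁)`. The leftover term `α g̃(xₜ)(xₜ - xₜ₊₁)`
is absorbed by `V_{xₜ}(xₜ₊₁) ≥ ‖xₜ₊₁ - xₜ‖ʳ / r` via Young's inequality with exponents `r, s`, at a cost
of `(α L₀)ˢ / s` per step, and the inexact subgradient costs `α η`. The Bregman terms telescope to at
most `V_{x⁰}(u) ≤ D`, and Jensen's inequality passes the regret bound to the average iterate. The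
step size `α` balances `T (α L₀)ˢ / s` against `D`.
-/

open Finset

section

variable {E : Type*} [NormedAddCommGroup E] [NormedSpace ℝ E]

/-- The prox-function `V_x(y)` of the proximal setup. -/
def bregmanDiv (Ψ : E → ℝ) (DΨ : E → E →L[ℝ] ℝ) (x y : E) : ℝ :=
  Ψ y - Ψ x - DΨ x (y - x)

theorem bregmanDiv_three_point (Ψ : E → ℝ) (DΨ : E → E →L[ℝ] ℝ) (x x' u : E) :
    bregmanDiv Ψ DΨ x u - bregmanDiv Ψ DΨ x' u - bregmanDiv Ψ DΨ x x' =
      (DΨ x' - DΨ x) (u - x') := by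
  have hsplit : u - x = (u - x') + (x' - x) := by abel
  simp only [bregmanDiv, sub_apply, hsplit, map_add]
  ring

theorem ContinuousLinearMap.mul_apply_le_young {g : E →L[ℝ] ℝ} {L α r s : ℝ} (hg : ‖g‖ ≤ L)
    (hα : 0 ≤ α) (hrs : r.HolderConjugate s) (v : E) :
    α * g v ≤ ‖v‖ ^ r / r + (α * L) ^ s / s := by
  have hL : 0 ≤ L := (norm_nonneg g).trans hg
  calc α * g v ≤ α * (‖g‖ * ‖v‖) := by gcongr; exact (le_abs_self _).trans (g.le_opNorm v)
    _ = ‖v‖ * (α * ‖g‖) := by ring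
    _ ≤ ‖v‖ * (α * L) := by gcongr
    _ ≤ ‖v‖ ^ r / r + (α * L) ^ s / s :=
      Real.young_inequality_of_nonneg (norm_nonneg v) (by positivity) hrs

theorem mirrorDescent_step_le {Ψ : E → ℝ} {DΨ : E → E →L[ℝ] ℝ} {F : E → ℝ}
    {G g : E →L[ℝ] ℝ} {x x' u : E} {r s L η α : ℝ} (hrs : r.HolderConjugate s) (hα : 0 ≤ α)
    (hunif : (1 / r) * ‖x' - x‖ ^ r ≤ bregmanDiv Ψ DΨ x x')
    (hsub : F x + G (u - x) ≤ F u) (happrox : |(g - G) (x - u)| ≤ η) (hbound : ‖g‖ ≤ L)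
    (hopt : 0 ≤ (α • g + (DΨ x' - DΨ x)) (u - x')) :
    α * (F x - F u) ≤ α * η + (α * L) ^ s / s + (bregmanDiv Ψ DΨ x u - bregmanDiv Ψ DΨ x' u) := by
  have hG : F x - F u ≤ g (x - u) + η := by
    have hneg : G (u - x) = -G (x - u) := by rw [← map_neg, neg_sub]
    rw [sub_apply] at happrox
    linarith [(abs_le.mp happrox).1]
  have hthree : α * g (x' - u) ≤
      bregmanDiv Ψ DΨ x u - bregmanDiv Ψ DΨ x' u - bregmanDiv Ψ DΨ x x' := by
    rw [bregmanDiv_three_point, ← neg_sub u, map_neg]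
    simp only [add_apply, smul_apply, smul_eq_mul] at hopt
    linarith
  have hyoung := g.mul_apply_le_young hbound hα hrs (x - x')
  have hsplit : g (x - u) = g (x - x') + g (x' - u) := by rw [← map_add, sub_add_sub_cancel]
  rw [norm_sub_rev, ← one_div_mul_eq_div] at hyoung
  have hαG := mul_le_mul_of_nonneg_left hG hα
  rw [hsplit] at hαG
  linarith

theorem Finset.sum_range_le_of_le_add_sub {a b : ℕ → ℝ} {c : ℝ} {T : ℕ}
    (h : ∀ t < T, a t ≤ c + (b t - b (t + 1))) :
    ∑ t ∈ range T, a t ≤ T * c + (b 0 - b T) := by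
  calc ∑ t ∈ range T, a t ≤ ∑ t ∈ range T, (c + (b t - b (t + 1))) :=
        sum_le_sum fun t ht ↦ h t (mem_range.mp ht)
    _ = T * c + (b 0 - b T) := by
      rw [sum_add_distrib, sum_const, card_range, nsmul_eq_mul, sum_range_sub']

theorem ConvexOn.map_average_range_le {K : Set E} {F : E → ℝ} (hF : ConvexOn ℝ K F) {x : ℕ → E}
    {T : ℕ} (hT : 0 < T) (hx : ∀ t < T, x t ∈ K) :
    F ((1 / (T : ℝ)) • ∑ t ∈ range T, x t) ≤ (1 / (T : ℝ)) * ∑ t ∈ range T, F (x t) := by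
  have hweights : ∑ _t ∈ range T, (1 / (T : ℝ)) = 1 := by
    rw [sum_const, card_range, nsmul_eq_mul]
    field_simp
  simpa only [smul_sum, mul_sum, smul_eq_mul] using
    hF.map_sum_le (fun _ _ ↦ by positivity) hweights fun t ht ↦ hx t (mem_range.mp ht)

theorem ConvexOn.map_average_sub_le_of_le_add_sub {K : Set E} {F : E → ℝ}
    (hF : ConvexOn ℝ K F) {x : ℕ → E} {b : ℕ → ℝ} {T : ℕ} {u : E} {α c : ℝ} (hT : 0 < T)
    (hα : 0 < α) (hx : ∀ t < T, x t ∈ K)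
    (hstep : ∀ t < T, α * (F (x t) - F u) ≤ c + (b t - b (t + 1))) :
    F ((1 / (T : ℝ)) • ∑ t ∈ range T, x t) - F u ≤ (T * c + (b 0 - b T)) / (α * T) := by
  have hT' : (0 : ℝ) < T := by exact_mod_cast hT
  have hregret := sum_range_le_of_le_add_sub hstep
  rw [← mul_sum, sum_sub_distrib, sum_const, card_range, nsmul_eq_mul] at hregret
  have hJ := hF.map_average_range_le hT hx
  rw [div_mul_eq_mul_div, one_mul, le_div_iff₀ hT'] at hJ
  rw [le_div_iff₀ (by positivity)]
  calc (F ((1 / (T : ℝ)) • ∑ t ∈ range T, x t) - F u) * (α * T)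
      = α * (F ((1 / (T : ℝ)) • ∑ t ∈ range T, x t) * T - T * F u) := by ring
    _ ≤ α * (∑ t ∈ range T, F (x t) - T * F u) := by gcongr
    _ ≤ T * c + (b 0 - b T) := hregret

theorem mirrorDescent_stepSize_bound {r s L D η α : ℝ} {T : ℕ} (hrs : r.HolderConjugate s)
    (hL : 0 < L) (hD : 0 < D) (hT : 0 < T) (hα : α = (1 / L) * (r * D / T) ^ (1 - 1 / r)) :
    (T * (α * η + (α * L) ^ s / s) + D) / (α * T) = L * (r * D / T) ^ (1 / r) + η := by
  set A := r * D / T with hA_def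
  have hT' : (0 : ℝ) < T := by exact_mod_cast hT
  have hA : 0 < A := by have := hrs.pos; positivity
  have hexp : 1 - 1 / r = 1 / s := by simpa only [one_div] using hrs.one_sub_inv
  have hαL : α * L = A ^ (1 / s) := by rw [hα, hexp]; field_simp
  have hpow : (α * L) ^ s = A := by
    rw [hαL, ← Real.rpow_mul hA.le, one_div_mul_cancel hrs.symm.ne_zero, Real.rpow_one]
  have hDT : D = T * (A / r) := by rw [hA_def]; field_simp [hrs.ne_zero]
  have hsplit : A = A ^ (1 / s) * A ^ (1 / r) := by
    rw [← Real.rpow_add hA, one_div, one_div, add_comm, hrs.inv_add_inv_eq_one, Real.rpow_one]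
  have hα_pos : 0 < α := by rw [hα]; positivity
  have hαA : A / α = L * A ^ (1 / r) := by
    rw [div_eq_iff hα_pos.ne']
    nth_rewrite 1 [hsplit]
    rw [← hαL]
    ring
  have hsum : A / s + A / r = A := by
    calc A / s + A / r = A * (r⁻¹ + s⁻¹) := by ring
      _ = A := by rw [hrs.inv_add_inv_eq_one, mul_one]
  calc (T * (α * η + (α * L) ^ s / s) + D) / (α * T) = η + (A / s + A / r) / α := by
        rw [hpow, hDT]; field_simp; ring
    _ = L * A ^ (1 / r) + η := by rw [hsum, hαA, add_comm]

end

theorem stmt_9_general {E : Type*} [NormedAddCommGroup E] [NormedSpace ℝ E]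
    (K : Set E)
    (r s L₀ η D : ℝ) (hr : 2 ≤ r) (hrs : 1 / r + 1 / s = 1)
    (hL₀ : 0 < L₀) (hD : 0 < D) (T : ℕ) (hT : 1 ≤ T)
    (Ψ : E → ℝ) (hΨ : ∀ x ∈ K, 0 ≤ Ψ x ∧ Ψ x ≤ D)
    (DΨ : E → (E →L[ℝ] ℝ))
    (hunif : ∀ x ∈ K, ∀ y ∈ K, Ψ y ≥ Ψ x + DΨ x (y - x) + (1 / r) * ‖y - x‖ ^ r)
    (F : E → ℝ) (hF : ConvexOn ℝ K F) (gradF : E → (E →L[ℝ] ℝ))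
    (hsub : ∀ x ∈ K, ∀ u ∈ K, F u ≥ F x + gradF x (u - x))
    (gtil : E → (E →L[ℝ] ℝ))
    (happrox : ∀ x ∈ K, ∀ y ∈ K, ∀ u ∈ K, |(gtil x - gradF x) (y - u)| ≤ η)
    (hbound : ∀ x ∈ K, ‖gtil x‖ ≤ L₀)
    (α : ℝ) (hα : α = (1 / L₀) * (r * D / T) ^ (1 - 1 / r))
    (x : ℕ → E) (hx0K : x 0 ∈ K)
    (hx0 : ∀ u ∈ K, 0 ≤ DΨ (x 0) (u - x 0))
    (hstep : ∀ t < T, x (t + 1) ∈ K ∧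
      ∀ u ∈ K, 0 ≤ (α • gtil (x t) + (DΨ (x (t + 1)) - DΨ (x t))) (u - x (t + 1))) :
    ∀ u ∈ K,
      F ((1 / (T : ℝ)) • ∑ t ∈ Finset.range T, x t) - F u ≤
        L₀ * (r * D / T) ^ (1 / r) + η := by
  intro u hu
  have hrs' : r.HolderConjugate s :=
    Real.holderConjugate_iff.mpr ⟨by linarith, by simpa only [one_div] using hrs⟩
  have hα_pos : 0 < α := by rw [hα]; have := hrs'.pos; positivity
  have hmem : ∀ t ≤ T, x t ∈ K := by
    rintro (_ | t) ht
    exacts [hx0K, (hstep t ht).1]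
  have hV₀ : bregmanDiv Ψ DΨ (x 0) u ≤ D := by
    rw [bregmanDiv]; linarith [(hΨ _ hx0K).1, (hΨ u hu).2, hx0 u hu]
  have hV_T : 0 ≤ bregmanDiv Ψ DΨ (x T) u := by
    have := hunif _ (hmem T le_rfl) u hu
    rw [bregmanDiv]; linarith [show 0 ≤ (1 / r) * ‖u - x T‖ ^ r by have := hrs'.pos; positivity]
  have hdescent : ∀ t < T, α * (F (x t) - F u) ≤ (α * η + (α * L₀) ^ s / s) +
      (bregmanDiv Ψ DΨ (x t) u - bregmanDiv Ψ DΨ (x (t + 1)) u) := fun t ht ↦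
    have hxt := hmem t ht.le
    mirrorDescent_step_le hrs' hα_pos.le
      (by rw [bregmanDiv]; linarith [hunif _ hxt _ (hstep t ht).1]) (hsub _ hxt u hu)
      (happrox _ hxt _ hxt u hu) (hbound _ hxt) ((hstep t ht).2 u hu)
  calc _ ≤ _ := hF.map_average_sub_le_of_le_add_sub hT hα_pos (fun t ht ↦ hmem t ht.le) hdescent
    _ ≤ (T * (α * η + (α * L₀) ^ s / s) + D) / (α * T) := by gcongr; linarith
    _ = L₀ * (r * D / T) ^ (1 / r) + η := mirrorDescent_stepSize_bound hrs' hL₀ hD hT hα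

/-- Guarantee of the inexact mirror-descent method with a proximal setup based on an
`r`-uniformly convex function. -/
theorem stmt_9 {E : Type*} [NormedAddCommGroup E] [NormedSpace ℝ E]
    (K : Set E) (hKne : K.Nonempty) (hK : Convex ℝ K)
    (r s L₀ η D : ℝ) (hr : 2 ≤ r) (hrs : 1 / r + 1 / s = 1)
    (hL₀ : 0 < L₀) (hη : 0 ≤ η) (hD : 0 < D) (T : ℕ) (hT : 1 ≤ T)
    (Ψ : E → ℝ) (hΨ : ∀ x ∈ K, 0 ≤ Ψ x ∧ Ψ x ≤ D)
    (DΨ : E → (E →L[ℝ] ℝ))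
    (hunif : ∀ x ∈ K, ∀ y ∈ K, Ψ y ≥ Ψ x + DΨ x (y - x) + (1 / r) * ‖y - x‖ ^ r)
    (F : E → ℝ) (hF : ConvexOn ℝ K F) (gradF : E → (E →L[ℝ] ℝ))
    (hsub : ∀ x ∈ K, ∀ u ∈ K, F u ≥ F x + gradF x (u - x))
    (gtil : E → (E →L[ℝ] ℝ))
    (happrox : ∀ x ∈ K, ∀ y ∈ K, ∀ u ∈ K, |(gtil x - gradF x) (y - u)| ≤ η)
    (hbound : ∀ x ∈ K, ‖gtil x‖ ≤ L₀)
    (α : ℝ) (hα : α = (1 / L₀) * (r * D / T) ^ (1 - 1 / r))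
    (x : ℕ → E) (hx0K : x 0 ∈ K)
    (hx0 : ∀ u ∈ K, 0 ≤ DΨ (x 0) (u - x 0))
    (hstep : ∀ t < T, x (t + 1) ∈ K ∧
      ∀ u ∈ K, 0 ≤ (α • gtil (x t) + (DΨ (x (t + 1)) - DΨ (x t))) (u - x (t + 1))) :
    ∀ u ∈ K,
      F ((1 / (T : ℝ)) • ∑ t ∈ Finset.range T, x t) - F u ≤
        L₀ * (r * D / T) ^ (1 / r) + η :=
  stmt_9_general K r s L₀ η D hr hrs hL₀ hD T hT Ψ hΨ DΨ hunif F hF gradF hsub gtil happrox hbound α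
    hα x hx0K hx0 hstep
end

section
/- Let K ⊂ ℝ^d be a compact convex set with nonempty interior, B > 0, η ≥ 0, γ ∈ (0, 1), and T ≥ 1 an integer. Let F : ℝ^d → ℝ be convex on K with |F(x)| ≤ B for all x ∈ K. Let x¹, …, x^T ∈ ℝ^d and g¹, g̃¹, …, g^T, g̃^T ∈ ℝ^d, and define G⁰ = K and G^t = G^{t−1} ∩ { y ∈ ℝ^d : ⟨g̃^t, y − x^t⟩ ≤ 0 } for t = 1, …, T. Suppose that for every t ∈ [T]: (i) x^t ∈ G^{t−1}; (ii) g^t is a subgradient of F at x^t over K, i.e. F(y) ≥ F(x^t) + ⟨g^t, y − x^t⟩ for all y ∈ K; (iii) |⟨g̃^t − g^t, y − x^t⟩| ≤ η for all y ∈ G^{t−1}; and (iv) vol(G^t) ≤ γ·vol(G^{t−1}), where vol denotes Lebesgue measure on ℝ^d. Then for every x ∈ K: min_{t ∈ [T]} F(x^t) ≤ F(x) + γ^{T/d}·2B + η. -/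
/-!
Fix `x' ∈ K` and a ratio `ε ∈ (γ^{T/d}, 1]`. The shrunken copy `x' + ε (K - x')` of `K` has volume
`ε^d vol K > γ^T vol K ≥ vol G^T`, so it contains a point `z ∉ G^T`. This `z` was discarded by some
cut `t`, i.e. `z ∈ G^{t-1}` and `⟨g̃^t, z - x^t⟩ > 0`; then the subgradient inequality and (iii) give
`F(x^t) ≤ F(z) + η`, while convexity gives `F(z) ≤ F(x') + 2εB`. Letting `ε ↓ γ^{T/d}` concludes.
-/

open MeasureTheory AffineMap
open scoped RealInnerProductSpace ENNReal

theorem ENNReal.le_geom {u : ℕ → ℝ≥0∞} {c : ℝ≥0∞} (n : ℕ) (h : ∀ k < n, u (k + 1) ≤ c * u k) :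
    u n ≤ c ^ n * u 0 := by
  induction n with
  | zero => simp
  | succ n ih =>
    calc u (n + 1) ≤ c * u n := h n n.lt_succ_self
      _ ≤ c * (c ^ n * u 0) := by gcongr; exact ih fun k hk => h k (hk.trans n.lt_succ_self)
      _ = c ^ (n + 1) * u 0 := by ring

theorem exists_mem_not_mem_succ {α : Type*} {G : ℕ → Set α} {z : α} {n : ℕ}
    (h0 : z ∈ G 0) (hn : z ∉ G n) : ∃ t < n, z ∈ G t ∧ z ∉ G (t + 1) := by
  induction n with
  | zero => exact absurd h0 hn
  | succ m ih =>
    by_cases hm : z ∈ G m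
    · exact ⟨m, m.lt_succ_self, hm, hn⟩
    · obtain ⟨t, ht, hzt, hzt'⟩ := ih hm
      exact ⟨t, ht.trans m.lt_succ_self, hzt, hzt'⟩

theorem le_of_forall_Ioc_ge_of_dense {α : Type*} [LinearOrder α] [DenselyOrdered α] {a r b : α}
    (hrb : r < b) (h : ∀ ε, r < ε → ε ≤ b → a ≤ ε) : a ≤ r :=
  le_of_forall_gt_imp_ge_of_dense fun ε hε =>
    (h (min ε b) (lt_min hε hrb) (min_le_right _ _)).trans (min_le_left _ _)

theorem exists_le_add_mul_of_forall_gt {f : ℕ → ℝ} {T : ℕ} {a b r : ℝ} (hb : 0 < b) (hr : r < 1)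
    (h : ∀ ε, r < ε → ε ≤ 1 → ∃ t < T, f t ≤ a + ε * b) : ∃ t < T, f t ≤ a + r * b := by
  obtain ⟨t, htT, -⟩ := h 1 hr le_rfl
  obtain ⟨t₀, ht₀, hmin⟩ := (Finset.range T).exists_min_image f ⟨t, Finset.mem_range.2 htT⟩
  refine ⟨t₀, Finset.mem_range.1 ht₀, ?_⟩
  have hgap : (f t₀ - a) / b ≤ r := by
    refine le_of_forall_Ioc_ge_of_dense hr fun ε hrε hε1 => ?_
    obtain ⟨t, htT, ht⟩ := h ε hrε hε1
    rw [div_le_iff₀ hb]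
    linarith [hmin t (Finset.mem_range.2 htT)]
  rw [div_le_iff₀ hb] at hgap
  linarith

theorem exists_homothety_not_mem_of_measure_le {E : Type*} [NormedAddCommGroup E]
    [NormedSpace ℝ E] [MeasurableSpace E] [BorelSpace E] [FiniteDimensional ℝ E]
    (μ : Measure E) [μ.IsAddHaarMeasure] {K S : Set E} (hK0 : μ K ≠ 0) (hKtop : μ K ≠ ⊤)
    (hE : Module.finrank ℝ E ≠ 0) {r ε : ℝ} (hr : 0 ≤ r) (hrε : r < ε)
    (hS : μ S ≤ ENNReal.ofReal (r ^ Module.finrank ℝ E) * μ K) (c : E) :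
    ∃ y ∈ K, homothety c ε y ∉ S := by
  by_contra! h
  have hsub : homothety c ε '' K ⊆ S := by
    rintro _ ⟨y, hy, rfl⟩
    exact h y hy
  have hle := (measure_mono hsub).trans hS
  rw [Measure.addHaar_image_homothety, abs_of_nonneg (by positivity [hr.trans hrε.le]),
    ENNReal.mul_le_mul_iff_left hK0 hKtop,
    ENNReal.ofReal_le_ofReal_iff (by positivity)] at hle
  exact (pow_lt_pow_left₀ hrε hr hE).not_ge hle

theorem ConvexOn.le_add_mul_of_abs_le {E : Type*} [AddCommGroup E] [Module ℝ E] {K : Set E}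
    {F : E → ℝ} {B ε : ℝ} (hF : ConvexOn ℝ K F) (hFB : ∀ x ∈ K, |F x| ≤ B) {c y : E}
    (hc : c ∈ K) (hy : y ∈ K) (hε : ε ∈ Set.Icc 0 1) :
    F (homothety c ε y) ≤ F c + ε * (2 * B) := by
  obtain ⟨hε0, hε1⟩ := hε
  have hconv := hF.2 hc hy (sub_nonneg.2 hε1) hε0 (sub_add_cancel 1 ε)
  rw [homothety_eq_lineMap, lineMap_apply_module]
  simp only [smul_eq_mul] at hconv
  have hFc := (abs_le.mp (hFB c hc)).1
  have hFy := (abs_le.mp (hFB y hy)).2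
  nlinarith

theorem le_add_of_inner_pos {E : Type*} [NormedAddCommGroup E] [InnerProductSpace ℝ E]
    {F : E → ℝ} {η : ℝ} {x z g g' : E} (hcut : 0 < ⟪g', z - x⟫)
    (hsub : F z ≥ F x + ⟪g, z - x⟫) (happrox : |⟪g' - g, z - x⟫| ≤ η) : F x ≤ F z + η := by
  rw [inner_sub_left] at happrox
  linarith [(abs_le.mp happrox).2]

theorem exists_iterate_le_add_of_not_mem {E : Type*} [NormedAddCommGroup E]
    [InnerProductSpace ℝ E] {K : Set E} {F : E → ℝ} {η : ℝ} {T : ℕ} {x g gt : ℕ → E}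
    {G : ℕ → Set E} (hG0 : G 0 = K)
    (hGsucc : ∀ t < T, G (t + 1) = G t ∩ {y | ⟪gt t, y - x t⟫ ≤ 0})
    (hsub : ∀ t < T, ∀ y ∈ K, F y ≥ F (x t) + ⟪g t, y - x t⟫)
    (happrox : ∀ t < T, ∀ y ∈ G t, |⟪gt t - g t, y - x t⟫| ≤ η)
    {z : E} (hzK : z ∈ K) (hzG : z ∉ G T) : ∃ t < T, F (x t) ≤ F z + η := by
  obtain ⟨t, htT, hzt, hzt1⟩ := exists_mem_not_mem_succ (hG0 ▸ hzK) hzG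
  have hcut : 0 < ⟪gt t, z - x t⟫ := by
    by_contra! h
    exact hzt1 (hGsucc t htT ▸ ⟨hzt, h⟩)
  exact ⟨t, htT, le_add_of_inner_pos hcut (hsub t htT z hzK) (happrox t htT z hzt)⟩

theorem stmt_10_general (d : ℕ) (hd : 1 ≤ d) (K : Set (EuclideanSpace ℝ (Fin d)))
    (hKcompact : IsCompact K) (hKconv : Convex ℝ K) (hKint : (interior K).Nonempty)
    (B η γ : ℝ) (hB : 0 < B) (hγ0 : 0 < γ) (hγ1 : γ < 1)
    (T : ℕ) (hT : 1 ≤ T)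
    (F : EuclideanSpace ℝ (Fin d) → ℝ) (hFconv : ConvexOn ℝ K F)
    (hFbound : ∀ x ∈ K, |F x| ≤ B)
    (x g gt : ℕ → EuclideanSpace ℝ (Fin d))
    (G : ℕ → Set (EuclideanSpace ℝ (Fin d)))
    (hG0 : G 0 = K)
    (hGsucc : ∀ t < T, G (t + 1) = G t ∩ {y | ⟪gt t, y - x t⟫ ≤ 0})
    (hsub : ∀ t < T, ∀ y ∈ K, F y ≥ F (x t) + ⟪g t, y - x t⟫)
    (happrox : ∀ t < T, ∀ y ∈ G t, |⟪gt t - g t, y - x t⟫| ≤ η)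
    (hvol : ∀ t < T, volume (G (t + 1)) ≤ ENNReal.ofReal γ * volume (G t)) :
    ∀ x' ∈ K, ∃ t < T, F (x t) ≤ F x' + γ ^ ((T : ℝ) / (d : ℝ)) * (2 * B) + η := by
  intro x' hx'
  set r := γ ^ ((T : ℝ) / (d : ℝ))
  have hr_pow : r ^ d = γ ^ T := by
    rw [← Real.rpow_natCast r, ← Real.rpow_mul hγ0.le,
      div_mul_cancel₀ _ (by positivity), Real.rpow_natCast]
  have hGT : volume (G T) ≤ ENNReal.ofReal (r ^ Module.finrank ℝ (EuclideanSpace ℝ (Fin d))) *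
      volume K := by
    rw [finrank_euclideanSpace_fin, hr_pow, ENNReal.ofReal_pow hγ0.le, ← hG0]
    exact ENNReal.le_geom (u := fun t => volume (G t)) T hvol
  have hbound : ∀ ε, r < ε → ε ≤ 1 → ∃ t < T, F (x t) ≤ F x' + η + ε * (2 * B) := by
    intro ε hrε hε1
    obtain ⟨y, hy, hzG⟩ := exists_homothety_not_mem_of_measure_le volume
      (Measure.measure_pos_of_nonempty_interior _ hKint).ne' hKcompact.measure_lt_top.ne
      (by simpa using Nat.one_le_iff_ne_zero.mp hd) (by positivity) hrε hGT x'
    have hε : ε ∈ Set.Icc 0 1 := ⟨(by positivity : 0 ≤ r).trans hrε.le, hε1⟩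
    have hzK : homothety x' ε y ∈ K := homothety_eq_lineMap x' ε y ▸ hKconv.lineMap_mem hx' hy hε
    obtain ⟨t, htT, ht⟩ := exists_iterate_le_add_of_not_mem hG0 hGsucc hsub happrox hzK hzG
    exact ⟨t, htT, by linarith [hFconv.le_add_mul_of_abs_le hFbound hx' hy hε]⟩
  obtain ⟨t, htT, ht⟩ := exists_le_add_mul_of_forall_gt (by positivity : (0 : ℝ) < 2 * B)
    (Real.rpow_lt_one hγ0.le hγ1 (by positivity [hT])) hbound
  exact ⟨t, htT, by linarith⟩

/-- Guarantee of the approximate center-of-gravity cutting-plane method with inexact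
gradients (indices shifted so that `x t`, `g t`, `gt t` for `t = 0, …, T-1` play the
roles of `x^{t+1}`, `g^{t+1}`, `g̃^{t+1}`). -/
theorem stmt_10 (d : ℕ) (hd : 1 ≤ d) (K : Set (EuclideanSpace ℝ (Fin d)))
    (hKcompact : IsCompact K) (hKconv : Convex ℝ K) (hKint : (interior K).Nonempty)
    (B η γ : ℝ) (hB : 0 < B) (hη : 0 ≤ η) (hγ0 : 0 < γ) (hγ1 : γ < 1)
    (T : ℕ) (hT : 1 ≤ T)
    (F : EuclideanSpace ℝ (Fin d) → ℝ) (hFconv : ConvexOn ℝ K F)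
    (hFbound : ∀ x ∈ K, |F x| ≤ B)
    (x g gt : ℕ → EuclideanSpace ℝ (Fin d))
    (G : ℕ → Set (EuclideanSpace ℝ (Fin d)))
    (hG0 : G 0 = K)
    (hGsucc : ∀ t < T, G (t + 1) = G t ∩ {y | ⟪gt t, y - x t⟫ ≤ 0})
    (hxG : ∀ t < T, x t ∈ G t)
    (hsub : ∀ t < T, ∀ y ∈ K, F y ≥ F (x t) + ⟪g t, y - x t⟫)
    (happrox : ∀ t < T, ∀ y ∈ G t, |⟪gt t - g t, y - x t⟫| ≤ η)
    (hvol : ∀ t < T, volume (G (t + 1)) ≤ ENNReal.ofReal γ * volume (G t)) :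
    ∀ x' ∈ K, ∃ t < T, F (x t) ≤ F x' + γ ^ ((T : ℝ) / (d : ℝ)) * (2 * B) + η :=
  stmt_10_general d hd K hKcompact hKconv hKint B η γ hB hγ0 hγ1 T hT F hFconv hFbound x g gt G hG0
    hGsucc hsub happrox hvol
end

section
/- Let (W, ‖·‖) be a real normed space, s ∈ (1, 2], and C ≥ 1 a constant such that for all w, z ∈ W: (‖w + z‖^s + ‖w − z‖^s)/2 ≤ ‖w‖^s + C·‖z‖^s. Then for every n ≥ 1 and all w¹, …, wⁿ ∈ W: 2^{−n} · Σ_{σ ∈ {−1,1}ⁿ} ‖ Σ_{j=1}^n σ_j w^j ‖^s ≤ C · Σ_{j=1}^n ‖w^j‖^s. -/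
lemma sum_piFinset_cons {n : ℕ} (T : Finset ℝ) (f : (Fin (n + 1) → ℝ) → ℝ) :
    ∑ σ ∈ Fintype.piFinset (fun _ : Fin (n + 1) => T), f σ =
      ∑ x ∈ T, ∑ σ ∈ Fintype.piFinset (fun _ : Fin n => T), f (Fin.cons x σ) := by
  rw [← Finset.sum_product']
  refine Finset.sum_nbij' (fun σ => (σ 0, Fin.tail σ)) (fun p => Fin.cons p.1 p.2) ?_ ?_ ?_ ?_ ?_
  · intro σ hσ
    simp only [Fintype.mem_piFinset] at hσ
    simp [Finset.mem_product, Fintype.mem_piFinset, hσ, Fin.tail]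
  · intro p hp
    simp only [Finset.mem_product, Fintype.mem_piFinset] at hp
    simp only [Fintype.mem_piFinset]
    intro i
    refine Fin.cases ?_ ?_ i
    · simpa using hp.1
    · intro j; simpa using hp.2 j
  · intro σ _; exact Fin.cons_self_tail σ
  · intro p _; simp
  · intro σ _; exact congrArg f (Fin.cons_self_tail σ).symm

theorem aux {W : Type*} [NormedAddCommGroup W] [NormedSpace ℝ W]
    (s C : ℝ) (hs1 : 1 < s) (hC : 1 ≤ C)
    (hsmooth : ∀ w z : W, (‖w + z‖ ^ s + ‖w - z‖ ^ s) / 2 ≤ ‖w‖ ^ s + C * ‖z‖ ^ s)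
    (n : ℕ) (w : Fin n → W) :
    ((2 : ℝ) ^ n)⁻¹ *
        ∑ σ ∈ Fintype.piFinset fun _ : Fin n => ({1, -1} : Finset ℝ),
          ‖∑ j, σ j • w j‖ ^ s ≤
      C * ∑ j, ‖w j‖ ^ s := by
  induction n with
  | zero =>
    simp [Real.zero_rpow (by positivity : s ≠ 0)]
  | succ n ih =>
    rw [sum_piFinset_cons]
    have hsplit : ∀ (x : ℝ) (σ : Fin n → ℝ),
        ∑ j, (Fin.cons x σ : Fin (n+1) → ℝ) j • w j
          = x • w 0 + ∑ j : Fin n, σ j • w j.succ := by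
      intro x σ
      rw [Fin.sum_univ_succ]
      simp
    have hkey : ∀ σ ∈ Fintype.piFinset (fun _ : Fin n => ({1, -1} : Finset ℝ)),
        ‖∑ j, (Fin.cons (1:ℝ) σ : Fin (n+1) → ℝ) j • w j‖ ^ s +
        ‖∑ j, (Fin.cons (-1:ℝ) σ : Fin (n+1) → ℝ) j • w j‖ ^ s ≤
        2 * (‖∑ j : Fin n, σ j • w j.succ‖ ^ s + C * ‖w 0‖ ^ s) := by
      intro σ _
      rw [hsplit 1 σ, hsplit (-1) σ]
      have := hsmooth (∑ j : Fin n, σ j • w j.succ) (w 0)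
      have h2 : (1:ℝ) • w 0 + ∑ j : Fin n, σ j • w j.succ
          = (∑ j : Fin n, σ j • w j.succ) + w 0 := by
        rw [one_smul]; abel
      have h3 : (-1:ℝ) • w 0 + ∑ j : Fin n, σ j • w j.succ
          = (∑ j : Fin n, σ j • w j.succ) - w 0 := by
        rw [neg_one_smul]; abel
      rw [h2, h3]
      linarith
    have card : (Fintype.piFinset (fun _ : Fin n => ({1, -1} : Finset ℝ))).card = 2 ^ n := by
      rw [Fintype.card_piFinset, Finset.prod_const, Finset.card_pair (by norm_num)]
      simp
    have hsum : ∑ x ∈ ({1, -1} : Finset ℝ),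
        ∑ σ ∈ Fintype.piFinset (fun _ : Fin n => ({1, -1} : Finset ℝ)),
          ‖∑ j, (Fin.cons x σ : Fin (n+1) → ℝ) j • w j‖ ^ s ≤
        2 * (∑ σ ∈ Fintype.piFinset (fun _ : Fin n => ({1, -1} : Finset ℝ)),
          ‖∑ j : Fin n, σ j • w j.succ‖ ^ s) + 2 ^ (n+1) * (C * ‖w 0‖ ^ s) := by
      rw [Finset.sum_insert (by norm_num), Finset.sum_singleton, ← Finset.sum_add_distrib]
      calc ∑ σ ∈ Fintype.piFinset (fun _ : Fin n => ({1, -1} : Finset ℝ)),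
            (‖∑ j, (Fin.cons (1:ℝ) σ : Fin (n+1) → ℝ) j • w j‖ ^ s +
             ‖∑ j, (Fin.cons (-1:ℝ) σ : Fin (n+1) → ℝ) j • w j‖ ^ s)
          ≤ ∑ σ ∈ Fintype.piFinset (fun _ : Fin n => ({1, -1} : Finset ℝ)),
            2 * (‖∑ j : Fin n, σ j • w j.succ‖ ^ s + C * ‖w 0‖ ^ s) :=
            Finset.sum_le_sum hkey
        _ = 2 * (∑ σ ∈ Fintype.piFinset (fun _ : Fin n => ({1, -1} : Finset ℝ)),
            ‖∑ j : Fin n, σ j • w j.succ‖ ^ s) + 2 ^ (n+1) * (C * ‖w 0‖ ^ s) := by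
            rw [← Finset.mul_sum, Finset.sum_add_distrib, Finset.sum_const, card, mul_add]
            ring
    have hpos : (0:ℝ) < ((2:ℝ) ^ (n+1))⁻¹ := by positivity
    have step1 : ((2:ℝ) ^ (n+1))⁻¹ *
        ∑ x ∈ ({1, -1} : Finset ℝ),
        ∑ σ ∈ Fintype.piFinset (fun _ : Fin n => ({1, -1} : Finset ℝ)),
          ‖∑ j, (Fin.cons x σ : Fin (n+1) → ℝ) j • w j‖ ^ s ≤
        ((2:ℝ) ^ n)⁻¹ * (∑ σ ∈ Fintype.piFinset (fun _ : Fin n => ({1, -1} : Finset ℝ)),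
          ‖∑ j : Fin n, σ j • w j.succ‖ ^ s) + C * ‖w 0‖ ^ s := by
      have := mul_le_mul_of_nonneg_left hsum hpos.le
      calc ((2:ℝ) ^ (n+1))⁻¹ * _ ≤ ((2:ℝ) ^ (n+1))⁻¹ *
          (2 * (∑ σ ∈ Fintype.piFinset (fun _ : Fin n => ({1, -1} : Finset ℝ)),
            ‖∑ j : Fin n, σ j • w j.succ‖ ^ s) + 2 ^ (n+1) * (C * ‖w 0‖ ^ s)) := this
        _ = ((2:ℝ) ^ n)⁻¹ * (∑ σ ∈ Fintype.piFinset (fun _ : Fin n => ({1, -1} : Finset ℝ)),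
            ‖∑ j : Fin n, σ j • w j.succ‖ ^ s) + C * ‖w 0‖ ^ s := by
            field_simp
            ring
    refine step1.trans ?_
    have := ih (fun j => w j.succ)
    rw [Fin.sum_univ_succ]
    have h0 : C * ‖w 0‖ ^ s ≤ C * ‖w 0‖ ^ s := le_rfl
    calc ((2:ℝ) ^ n)⁻¹ * (∑ σ ∈ Fintype.piFinset (fun _ : Fin n => ({1, -1} : Finset ℝ)),
          ‖∑ j : Fin n, σ j • w j.succ‖ ^ s) + C * ‖w 0‖ ^ s
        ≤ C * ∑ j : Fin n, ‖w j.succ‖ ^ s + C * ‖w 0‖ ^ s := by linarith [this]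
      _ = C * (‖w 0‖ ^ s + ∑ j : Fin n, ‖w j.succ‖ ^ s) := by ring

/-- Martingale-type Rademacher inequality for `s`-uniformly smooth normed spaces. -/
theorem stmt_14 {W : Type*} [NormedAddCommGroup W] [NormedSpace ℝ W]
    (s C : ℝ) (hs1 : 1 < s) (hs2 : s ≤ 2) (hC : 1 ≤ C)
    (hsmooth : ∀ w z : W, (‖w + z‖ ^ s + ‖w - z‖ ^ s) / 2 ≤ ‖w‖ ^ s + C * ‖z‖ ^ s)
    (n : ℕ) (hn : 1 ≤ n) (w : Fin n → W) :
    ((2 : ℝ) ^ n)⁻¹ *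
        ∑ σ ∈ Fintype.piFinset fun _ : Fin n => ({1, -1} : Finset ℝ),
          ‖∑ j, σ j • w j‖ ^ s ≤
      C * ∑ j, ‖w j‖ ^ s :=
  aux s C hs1 hC hsmooth n w
end

section
/- Let d ≥ 1, 0 < r₀ ≤ r₁, and let G ⊆ ℝ^d be a convex set with B₂(0, r₀) ⊆ G ⊆ B₂(0, r₁), where B₂(c, ρ) denotes the closed Euclidean ball of radius ρ centered at c. Let g ∈ ℝ^d with g ≠ 0, define G′ = { y ∈ G : ⟨g, y⟩ ≤ 0 } and x′ = −(r₀/2)·g/‖g‖₂. Then B₂(x′, r₀/2) ⊆ G′ and G′ ⊆ B₂(x′, r₀/2 + r₁). -/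
open scoped RealInnerProductSpace

open Metric

section HalfspaceBall

variable {E : Type*} [SeminormedAddCommGroup E] [InnerProductSpace ℝ E]

theorem real_inner_le_add_of_mem_closedBall (g : E) {c y : E} {ρ : ℝ}
    (hy : y ∈ closedBall c ρ) : ⟪g, y⟫ ≤ ⟪g, c⟫ + ‖g‖ * ρ := by
  have hcs := real_inner_le_norm g (y - c)
  have hdist := mul_le_mul_of_nonneg_left (mem_closedBall_iff_norm.1 hy) (norm_nonneg g)
  rw [inner_sub_right] at hcs
  linarith

theorem real_inner_inv_norm_smul_self (g : E) : ⟪g, ‖g‖⁻¹ • g⟫ = ‖g‖ := by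
  rw [real_inner_smul_self_right, ← mul_assoc, inv_mul_mul_self]

theorem norm_smul_inv_norm_smul_le {ρ : ℝ} (hρ : 0 ≤ ρ) (g : E) : ‖ρ • (‖g‖⁻¹ • g)‖ ≤ ρ := by
  rw [norm_smul_of_nonneg hρ]
  exact mul_le_of_le_one_right hρ (mem_closedBall_zero_iff.1 (inv_norm_smul_mem_unitClosedBall g))

theorem closedBall_neg_smul_inv_norm_smul_subset (g : E) (ρ : ℝ) :
    closedBall (-(ρ • (‖g‖⁻¹ • g))) ρ ⊆ {y | ⟪g, y⟫ ≤ 0} := fun y hy => by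
  have h := real_inner_le_add_of_mem_closedBall g hy
  rw [inner_neg_right, real_inner_smul_right, real_inner_inv_norm_smul_self] at h
  show ⟪g, y⟫ ≤ 0
  linarith [mul_comm ρ ‖g‖]

end HalfspaceBall

theorem stmt_16_general (d : ℕ) (r₀ r₁ : ℝ) (hr₀ : 0 < r₀)
    (G : Set (EuclideanSpace ℝ (Fin d)))
    (hGlow : Metric.closedBall (0 : EuclideanSpace ℝ (Fin d)) r₀ ⊆ G)
    (hGup : G ⊆ Metric.closedBall (0 : EuclideanSpace ℝ (Fin d)) r₁)
    (g : EuclideanSpace ℝ (Fin d))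
    (G' : Set (EuclideanSpace ℝ (Fin d))) (hG' : G' = {y ∈ G | ⟪g, y⟫ ≤ 0})
    (x' : EuclideanSpace ℝ (Fin d)) (hx' : x' = -((r₀ / 2) • (‖g‖⁻¹ • g))) :
    Metric.closedBall x' (r₀ / 2) ⊆ G' ∧ G' ⊆ Metric.closedBall x' (r₀ / 2 + r₁) := by
  subst hG' hx'
  have hx' : ‖(r₀ / 2) • (‖g‖⁻¹ • g)‖ ≤ r₀ / 2 := norm_smul_inv_norm_smul_le (by positivity) g
  constructor
  · intro y hy
    refine ⟨hGlow (closedBall_subset_closedBall' ?_ hy),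
      closedBall_neg_smul_inv_norm_smul_subset g _ hy⟩
    rw [dist_zero_right, norm_neg]
    linarith
  · rintro y ⟨hyG, -⟩
    refine closedBall_subset_closedBall' ?_ (hGup hyG)
    rw [dist_zero_left, norm_neg]
    linarith

/-- Sandwiching step of the efficient center-of-gravity method: after cutting a localizer
sandwiched between balls of radii `r₀` and `r₁` by a halfspace through the origin, the new
localizer is sandwiched between balls of radii `r₀/2` and `r₀/2 + r₁` centered at `x'`. -/
theorem stmt_16 (d : ℕ) (hd : 1 ≤ d) (r₀ r₁ : ℝ) (hr₀ : 0 < r₀) (hr : r₀ ≤ r₁)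
    (G : Set (EuclideanSpace ℝ (Fin d))) (hG : Convex ℝ G)
    (hGlow : Metric.closedBall (0 : EuclideanSpace ℝ (Fin d)) r₀ ⊆ G)
    (hGup : G ⊆ Metric.closedBall (0 : EuclideanSpace ℝ (Fin d)) r₁)
    (g : EuclideanSpace ℝ (Fin d)) (hg : g ≠ 0)
    (G' : Set (EuclideanSpace ℝ (Fin d))) (hG' : G' = {y ∈ G | ⟪g, y⟫ ≤ 0})
    (x' : EuclideanSpace ℝ (Fin d)) (hx' : x' = -((r₀ / 2) • (‖g‖⁻¹ • g))) :
    Metric.closedBall x' (r₀ / 2) ⊆ G' ∧ G' ⊆ Metric.closedBall x' (r₀ / 2 + r₁) :=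
  stmt_16_general d r₀ r₁ hr₀ G hGlow hGup g G' hG' x' hx'
end

section
/- Let n ≥ 1 be a real number, and let α, p, p_A, v be real numbers with 0 < α ≤ p_A ≤ 1 and 0 ≤ p ≤ p_A. If |v − p| ≤ max{ α/n, √( p(1−p)·α/n ) }, then |v − p| ≤ p_A / √n. -/
/-- The VSTAT accuracy guarantee for a conditioned query implies the stronger
bound `|v - p| ≤ p_A / √n`. -/
theorem stmt_17 (n α p pA v : ℝ) (hn : 1 ≤ n)
    (hα : 0 < α) (hαpA : α ≤ pA) (hpA : pA ≤ 1) (hp0 : 0 ≤ p) (hppA : p ≤ pA)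
    (hv : |v - p| ≤ max (α / n) (Real.sqrt (p * (1 - p) * α / n))) :
    |v - p| ≤ pA / Real.sqrt n := by
  have hn0 : (0:ℝ) < n := lt_of_lt_of_le one_pos hn
  have hsn : Real.sqrt n ≤ n := by
    nlinarith [Real.sq_sqrt hn0.le, Real.sqrt_nonneg n,
      Real.one_le_sqrt.mpr hn]
  have hsn0 : 0 < Real.sqrt n := Real.sqrt_pos.mpr hn0
  have hpA0 : 0 < pA := lt_of_lt_of_le hα hαpA
  refine hv.trans (max_le ?_ ?_)
  · calc α / n ≤ pA / n := by gcongr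
      _ ≤ pA / Real.sqrt n := by
        apply div_le_div_of_nonneg_left hpA0.le hsn0 hsn
  · have key : p * (1 - p) * α / n ≤ (pA / Real.sqrt n) ^ 2 := by
      have : (pA / Real.sqrt n) ^ 2 = pA ^ 2 / n := by
        rw [div_pow, Real.sq_sqrt hn0.le]
      rw [this]
      gcongr ?_ / n
      nlinarith [mul_nonneg hp0 (sub_nonneg.mpr (hppA.trans hpA)), mul_le_mul hppA hαpA hα.le hpA0.le, sq_nonneg p]
    calc Real.sqrt (p * (1 - p) * α / n)
        ≤ Real.sqrt ((pA / Real.sqrt n) ^ 2) := Real.sqrt_le_sqrt key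
      _ = pA / Real.sqrt n := Real.sqrt_sq (by positivity)
end
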